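/- arXiv:math/0703255 — 2 statements merged into one kernel-verified Lean document; each statement's English description precedes it below -/
import Mathlib

section
/- For every natural number n, ((3n)! / (n!)^3) * ∑_{k=0}^{n} C(n,k)^2 C(n+k,n) = ∑_{k=0}^{n} (-1)^{n+k} C(n+k,n)^3 C(2n-k,n) C(3n,n+k), as integers. -/
/-! Both `(3n)!/(n!)^3 = C(3n,n) C(2n,n)` and
`C(3n,n+k) C(2n-k,n) C(n+k,n) = C(3n,n) C(2n,n) C(n,k)`, so the multinomial coefficient
factors out of the right-hand side and the claim reduces to
`∑ (-1)^(n+k) C(n,k) C(n+k,n)^2 = ∑ C(n,k)^2 C(n+k,n)`. Expanding one factor `C(n+k,n)` by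
Vandermonde as `∑_j C(n,j) C(k,n-j)` and swapping the sums, the inner sum over `k` becomes
`C(n,j)` times a `j`-th forward difference of `x ↦ C(x,n)` at `2n-j`, namely `C(n,j) C(2n-j,n)`;
the reflection `j ↦ n-j` turns `∑_j C(n,j)^2 C(2n-j,n)` into `∑ C(n,k)^2 C(n+k,n)`. -/

open Finset Nat

theorem Int.alternating_sum_choose_mul_add_choose {j m : ℕ} (hjm : j ≤ m) (a : ℕ) :
    ∑ t ∈ Finset.range (j + 1), (-1 : ℤ) ^ (j - t) * j.choose t * (a + t).choose m =
      a.choose (m - j) := by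
  have h := fwdDiff_iter_eq_sum_shift (1 : ℕ) (fun x ↦ (x.choose m : ℤ)) j a
  rw [← Nat.add_sub_cancel' hjm, fwdDiff_iter_choose] at h
  simpa [Nat.add_sub_cancel' hjm] using h.symm

theorem Nat.choose_mul_choose_mul_add_choose {n k : ℕ} (hk : k ≤ n) :
    (3 * n).choose (n + k) * (2 * n - k).choose n * (n + k).choose n =
      (3 * n).choose n * (2 * n).choose n * n.choose k := by
  have h₁ : (3 * n).choose (n + k) * (n + k).choose n = (3 * n).choose n * (2 * n).choose k := by
    rw [Nat.choose_mul (by omega), show 3 * n - n = 2 * n by omega, Nat.add_sub_cancel_left]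
  have h₂ : (2 * n).choose (2 * n - k) * (2 * n - k).choose n =
      (2 * n).choose n * n.choose k := by
    rw [Nat.choose_mul (by omega), show 2 * n - n = n by omega, show 2 * n - k - n = n - k by omega,
      Nat.choose_symm hk]
  rw [mul_right_comm, h₁, mul_assoc, ← Nat.choose_symm (by omega : k ≤ 2 * n), h₂,
    mul_assoc]

theorem Nat.factorial_three_mul_div_factorial_pow_three (n : ℕ) :
    (3 * n)! / n ! ^ 3 = (3 * n).choose n * (2 * n).choose n := by
  have h₂ := Nat.add_choose_mul_factorial_mul_factorial n n
  have h₃ := Nat.add_choose_mul_factorial_mul_factorial (2 * n) n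
  rw [← two_mul] at h₂
  rw [show 2 * n + n = 3 * n by omega, ← h₂] at h₃
  rw [← h₃, show (3 * n).choose n * ((2 * n).choose n * n ! * n !) * n ! =
    (3 * n).choose n * (2 * n).choose n * n ! ^ 3 by ring]
  exact Nat.mul_div_cancel _ (by positivity)

theorem Int.alternating_sum_choose_mul_choose_mul_add_choose {n j : ℕ} (hj : j ≤ n) :
    ∑ k ∈ Finset.range (n + 1),
        (-1 : ℤ) ^ (n + k) * n.choose k * k.choose (n - j) * (n + k).choose n =
      n.choose j * (2 * n - j).choose n := by
  rw [show n + 1 = (n - j) + (j + 1) by omega, sum_range_add,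
    sum_eq_zero fun k hk ↦ by simp [Nat.choose_eq_zero_of_lt (mem_range.1 hk)], zero_add]
  calc _ = ∑ t ∈ Finset.range (j + 1),
        n.choose j * ((-1 : ℤ) ^ (j - t) * j.choose t * (2 * n - j + t).choose n) := by
        refine sum_congr rfl fun t ht ↦ ?_
        have ht := mem_range_succ_iff.1 ht
        have hsign : (-1 : ℤ) ^ (n + (n - j + t)) = (-1) ^ (j - t) := by
          rw [show n + (n - j + t) = (j - t) + 2 * (n - j + t) by omega, pow_add, pow_mul]
          simp
        have hchoose : (n.choose (n - j + t) * (n - j + t).choose (n - j) : ℤ) =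
            n.choose j * j.choose t := by
          norm_cast
          rw [Nat.choose_mul (by omega), show n - (n - j) = j by omega, Nat.add_sub_cancel_left,
            Nat.choose_symm hj]
        rw [hsign, show n + (n - j + t) = 2 * n - j + t by omega]
        linear_combination ((-1 : ℤ) ^ (j - t) * (2 * n - j + t).choose n) * hchoose
    _ = n.choose j * (2 * n - j).choose (n - j) := by
        rw [← mul_sum, Int.alternating_sum_choose_mul_add_choose hj]
    _ = n.choose j * (2 * n - j).choose n := by
        rw [Nat.choose_symm_of_eq_add (show 2 * n - j = (n - j) + n by omega)]

theorem Int.alternating_sum_choose_mul_add_choose_sq (n : ℕ) :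
    ∑ k ∈ Finset.range (n + 1), (-1 : ℤ) ^ (n + k) * n.choose k * (n + k).choose n ^ 2 =
      ∑ k ∈ Finset.range (n + 1), (n.choose k : ℤ) ^ 2 * (n + k).choose n := by
  have vandermonde (k : ℕ) :
      ((n + k).choose n : ℤ) =
        ∑ j ∈ Finset.range (n + 1), (n.choose j : ℤ) * k.choose (n - j) := by
    rw [Nat.add_choose_eq, Nat.sum_antidiagonal_eq_sum_range_succ_mk]
    push_cast
    rfl
  calc _ = ∑ k ∈ Finset.range (n + 1), (-1 : ℤ) ^ (n + k) * n.choose k * (n + k).choose n *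
        ∑ j ∈ Finset.range (n + 1), (n.choose j : ℤ) * k.choose (n - j) :=
        sum_congr rfl fun k _ ↦ by rw [← vandermonde]; ring
    _ = ∑ j ∈ Finset.range (n + 1), (n.choose j : ℤ) * ∑ k ∈ Finset.range (n + 1),
        (-1 : ℤ) ^ (n + k) * n.choose k * k.choose (n - j) * (n + k).choose n := by
        simp_rw [mul_sum]
        rw [sum_comm]
        exact sum_congr rfl fun j _ ↦ sum_congr rfl fun k _ ↦ by ring
    _ = ∑ j ∈ Finset.range (n + 1), (n.choose j : ℤ) ^ 2 * (2 * n - j).choose n :=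
        sum_congr rfl fun j hj ↦ by
          rw [Int.alternating_sum_choose_mul_choose_mul_add_choose (mem_range_succ_iff.1 hj)]
          ring
    _ = _ := by
        rw [← sum_range_reflect]
        refine sum_congr rfl fun k hk ↦ ?_
        have hk := mem_range_succ_iff.1 hk
        rw [show n + 1 - 1 - k = n - k by omega, show 2 * n - (n - k) = n + k by omega,
          Nat.choose_symm hk]

theorem stmt_9 (n : ℕ) :
    (((3 * n).factorial / (n.factorial) ^ 3 : ℕ) : ℤ) *
        ∑ k ∈ Finset.range (n + 1), ((n.choose k : ℤ)) ^ 2 * ((n + k).choose n) =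
      ∑ k ∈ Finset.range (n + 1),
        (-1 : ℤ) ^ (n + k) * ((n + k).choose n) ^ 3 * ((2 * n - k).choose n) *
          ((3 * n).choose (n + k)) := by
  have hterm (k : ℕ) (hk : k ∈ Finset.range (n + 1)) :
      (-1 : ℤ) ^ (n + k) * ((n + k).choose n) ^ 3 * ((2 * n - k).choose n) *
          ((3 * n).choose (n + k)) =
        ((3 * n).choose n * (2 * n).choose n : ℤ) *
          ((-1) ^ (n + k) * n.choose k * (n + k).choose n ^ 2) := by
    have h : ((3 * n).choose (n + k) * (2 * n - k).choose n * (n + k).choose n : ℤ) =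
        (3 * n).choose n * (2 * n).choose n * n.choose k := by
      exact_mod_cast Nat.choose_mul_choose_mul_add_choose (mem_range_succ_iff.1 hk)
    linear_combination (-1 : ℤ) ^ (n + k) * (n + k).choose n ^ 2 * h
  rw [sum_congr rfl hterm, ← mul_sum, Int.alternating_sum_choose_mul_add_choose_sq,
    Nat.factorial_three_mul_div_factorial_pow_three]
  push_cast
  rfl
end

section
/- For every natural number n, C(2n,n) * ∑_{k=0}^{n} C(n,k)^2 C(2n,2k) = ∑_{k=0}^{n} C(2k,k) C(2n-2k,n-k) C(2n,2k)^2. -/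
/-! Termwise, `C(2n,n) C(n,k)² = C(2k,k) C(2n-2k,n-k) C(2n,2k)`: with `n = k + m`, both sides
are the multinomial coefficient `(2k+2m)! / (k!² m!²)`, once via `C(2n,n) · C(n,k)²` and once
via `C(2k,k) · C(2m,m) · C(2n,2k)`. -/

open Nat

theorem Nat.choose_two_mul_mul_choose_sq (k m : ℕ) :
    (2 * (k + m)).choose (k + m) * ((k + m).choose k) ^ 2 =
      (2 * k).choose k * (2 * m).choose m * (2 * (k + m)).choose (2 * k) := by
  have central (j : ℕ) : (2 * j).choose j * j ! * j ! = (2 * j)! := by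
    simpa [two_mul] using add_choose_mul_factorial_mul_factorial j j
  have split : (k + m).choose k * k ! * m ! = (k + m)! := by
    simpa using choose_mul_factorial_mul_factorial (le_add_right k m)
  have merge : (2 * (k + m)).choose (2 * k) * (2 * m)! * (2 * k)! = (2 * (k + m))! := by
    simpa [mul_add, add_comm] using add_choose_mul_factorial_mul_factorial (2 * m) (2 * k)
  refine Nat.eq_of_mul_eq_mul_right (by positivity : 0 < (k ! * m !) ^ 2) ?_
  calc (2 * (k + m)).choose (k + m) * ((k + m).choose k) ^ 2 * (k ! * m !) ^ 2
      = (2 * (k + m)).choose (k + m) * ((k + m).choose k * k ! * m !) ^ 2 := by ring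
    _ = (2 * (k + m))! := by rw [split, sq, ← mul_assoc, central]
    _ = ((2 * k).choose k * k ! * k !) * ((2 * m).choose m * m ! * m !) *
          (2 * (k + m)).choose (2 * k) := by rw [central, central, ← merge]; ring
    _ = (2 * k).choose k * (2 * m).choose m * (2 * (k + m)).choose (2 * k) * (k ! * m !) ^ 2 := by
      ring

theorem stmt_17 (n : ℕ) :
    ((2 * n).choose n) *
        ∑ k ∈ Finset.range (n + 1), (n.choose k) ^ 2 * ((2 * n).choose (2 * k)) =
      ∑ k ∈ Finset.range (n + 1),
        ((2 * k).choose k) * ((2 * n - 2 * k).choose (n - k)) * ((2 * n).choose (2 * k)) ^ 2 := by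
  rw [Finset.mul_sum]
  refine Finset.sum_congr rfl fun k hk => ?_
  obtain ⟨m, rfl⟩ := Nat.exists_eq_add_of_le (Finset.mem_range_succ_iff.mp hk)
  have hm : 2 * (k + m) - 2 * k = 2 * m := by omega
  rw [hm, Nat.add_sub_cancel_left, ← mul_assoc, Nat.choose_two_mul_mul_choose_sq]
  ring
end
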